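/- arXiv:1210.4050 — 4 statements merged into one kernel-verified Lean document; each statement's English description precedes it below -/
import Mathlib

section
/- Let H be a Hilbert space, X a self-adjoint finite-rank operator on H with trace zero, and Q an operator with 0 ≤ Q ≤ 1. Then |Tr(QX)| ≤ (1/2)·rank(X)·‖X‖. -/
open scoped InnerProductSpace ComplexOrder

theorem LinearMap.IsSymmetric.exists_orthonormal_eigen_expansion
    {𝕜 E : Type*} [RCLike 𝕜] [NormedAddCommGroup E] [InnerProductSpace 𝕜 E]
    {T : E →ₗ[𝕜] E} (hT : T.IsSymmetric) [FiniteDimensional 𝕜 (LinearMap.range T)] :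
    ∃ (e : Fin (Module.finrank 𝕜 (LinearMap.range T)) → E)
      (μ : Fin (Module.finrank 𝕜 (LinearMap.range T)) → ℝ),
      Orthonormal 𝕜 e ∧ (∀ k, T (e k) = (μ k : 𝕜) • e k) ∧ ∀ z, T z = ∑ k, ⟪e k, z⟫_𝕜 • T (e k) := by
  set V := LinearMap.range T
  have hTV : ∀ v ∈ V, T v ∈ V := fun v _ => LinearMap.mem_range_self T v
  have hsymm := hT.restrict_invariant hTV
  set b := hsymm.eigenvectorBasis rfl
  have heig (k) : T (b k : E) = (hsymm.eigenvalues rfl k : 𝕜) • (b k : E) :=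
    congrArg Subtype.val (hsymm.apply_eigenvectorBasis rfl k)
  refine ⟨fun k => b k, hsymm.eigenvalues rfl, b.orthonormal.comp_linearIsometry V.subtypeₗᵢ, heig,
    fun z => ?_⟩
  -- `T z ∈ V` is expanded in the eigenbasis; symmetry moves `T` onto the basis vectors.
  have hexp := congrArg Subtype.val (b.sum_repr' ⟨T z, LinearMap.mem_range_self T z⟩)
  simp only [Submodule.coe_sum, Submodule.coe_smul, Submodule.coe_inner] at hexp
  rw [← hexp]
  refine Finset.sum_congr rfl fun k _ => ?_
  rw [← hT, heig, inner_smul_left, RCLike.conj_ofReal, smul_smul, mul_comm, ← smul_smul]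

theorem HilbertBasis.hasSum_inner_apply_of_eq_sum
    {ι κ 𝕜 E : Type*} [RCLike 𝕜] [NormedAddCommGroup E] [InnerProductSpace 𝕜 E]
    (b : HilbertBasis ι 𝕜 E) {A : E → E} (s : Finset κ) (u w : κ → E)
    (hA : ∀ z, A z = ∑ k ∈ s, ⟪u k, z⟫_𝕜 • w k) :
    HasSum (fun i => ⟪b i, A (b i)⟫_𝕜) (∑ k ∈ s, ⟪u k, w k⟫_𝕜) := by
  simp only [hA, inner_sum, inner_smul_right]
  exact hasSum_sum fun k _ => b.hasSum_inner_mul_inner (u k) (w k)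

theorem ContinuousLinearMap.norm_le_opNorm_of_apply_eq_smul
    {𝕜 E : Type*} [NontriviallyNormedField 𝕜] [NormedAddCommGroup E] [NormedSpace 𝕜 E]
    (A : E →L[𝕜] E) {v : E} (hv : ‖v‖ = 1) {c : 𝕜} (h : A v = c • v) : ‖c‖ ≤ ‖A‖ := by
  simpa [h, norm_smul, hv] using A.le_opNorm v

theorem ContinuousLinearMap.IsPositive.inner_apply_mem_Icc
    {E : Type*} [NormedAddCommGroup E] [InnerProductSpace ℂ E] {Q : E →L[ℂ] E}
    (hQ0 : Q.IsPositive) (hQ1 : (1 - Q).IsPositive) {v : E} (hv : ‖v‖ = 1) :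
    ⟪v, Q v⟫_ℂ ∈ Set.Icc 0 1 := by
  have h := hQ1.inner_nonneg_right v
  rw [sub_apply, inner_sub_right, one_apply_eq_self, inner_self_eq_norm_sq_to_K, hv] at h
  exact ⟨hQ0.inner_nonneg_right v, by simpa using h⟩

theorem Complex.norm_sub_half_le_of_mem_Icc {q : ℂ} (hq : q ∈ Set.Icc 0 1) :
    ‖q - 1 / 2‖ ≤ 1 / 2 := by
  obtain ⟨⟨hre0, him⟩, ⟨hre1, -⟩⟩ := And.intro (Complex.le_def.mp hq.1) (Complex.le_def.mp hq.2)
  have hreal : q - 1 / 2 = ((q.re - 1 / 2 : ℝ) : ℂ) := by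
    apply Complex.ext <;> simp [← him]
  rw [hreal, Complex.norm_real, Real.norm_eq_abs, abs_le]
  simp only [Complex.zero_re, Complex.one_re] at hre0 hre1
  constructor <;> linarith

theorem norm_sum_mul_le_of_sum_eq_zero {κ : Type*} (s : Finset κ) {μ q : κ → ℂ} {M : ℝ}
    (hμ : ∑ k ∈ s, μ k = 0) (hμM : ∀ k ∈ s, ‖μ k‖ ≤ M) (hq : ∀ k ∈ s, q k ∈ Set.Icc 0 1) :
    ‖∑ k ∈ s, μ k * q k‖ ≤ 1 / 2 * s.card * M := by
  have hshift : ∑ k ∈ s, μ k * q k = ∑ k ∈ s, μ k * (q k - 1 / 2) := by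
    simp only [mul_sub, Finset.sum_sub_distrib, ← Finset.sum_mul, hμ, zero_mul, sub_zero]
  calc ‖∑ k ∈ s, μ k * q k‖ ≤ ∑ k ∈ s, ‖μ k‖ * ‖q k - 1 / 2‖ := by
        rw [hshift]; exact (norm_sum_le _ _).trans_eq (by simp only [norm_mul])
    _ ≤ ∑ k ∈ s, M * (1 / 2) := Finset.sum_le_sum fun k hk =>
        mul_le_mul (hμM k hk) (Complex.norm_sub_half_le_of_mem_Icc (hq k hk)) (norm_nonneg _)
          ((norm_nonneg _).trans (hμM k hk))
    _ = 1 / 2 * s.card * M := by rw [Finset.sum_const, nsmul_eq_mul]; ring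

/-- Let `H` be a complex Hilbert space, `X` a self-adjoint finite-rank
operator on `H` with trace zero, and `Q` an operator with `0 ≤ Q ≤ 1`.  Then
`|Tr(QX)| ≤ (1/2) · rank(X) · ‖X‖`.  Traces are expressed with respect to a Hilbert basis
`b` of `H` as (assumed convergent) sums `∑ᵢ ⟪b i, T (b i)⟫`. -/
theorem trace_QX_bound
    {H : Type*} [NormedAddCommGroup H] [InnerProductSpace ℂ H] [CompleteSpace H]
    {ι : Type*} (b : HilbertBasis ι ℂ H)
    (X : H →L[ℂ] H) (hXsa : IsSelfAdjoint X)
    (hXfr : FiniteDimensional ℂ (LinearMap.range (X : H →ₗ[ℂ] H)))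
    (hXtr : HasSum (fun i => (inner ℂ (b i) (X (b i)) : ℂ)) 0)
    (Q : H →L[ℂ] H) (hQ0 : Q.IsPositive) (hQ1 : (1 - Q).IsPositive)
    (T : ℂ) (hT : HasSum (fun i => (inner ℂ (b i) ((Q ∘L X) (b i)) : ℂ)) T) :
    ‖T‖ ≤ (1 / 2 : ℝ) * (Module.finrank ℂ (LinearMap.range (X : H →ₗ[ℂ] H)) : ℝ) * ‖X‖ := by
  obtain ⟨e, μ, he, heig, hexp⟩ := hXsa.isSymmetric.exists_orthonormal_eigen_expansion
  have htrace (R : H →L[ℂ] H) :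
      HasSum (fun i => ⟪b i, R (X (b i))⟫_ℂ) (∑ k, (μ k : ℂ) * ⟪e k, R (e k)⟫_ℂ) := by
    have h := b.hasSum_inner_apply_of_eq_sum (A := fun z => R (X z)) Finset.univ e
      (fun k => R (X (e k)))
      (fun z => by simp only [show X z = _ from hexp z, map_sum, map_smul]; rfl)
    simpa only [show ∀ k, X (e k) = (μ k : ℂ) • e k from heig, map_smul, inner_smul_right] using h
  have hμ : ∑ k, (μ k : ℂ) = 0 := by
    simpa [he.1] using (htrace 1).unique hXtr
  rw [hT.unique (htrace Q)]
  simpa using norm_sum_mul_le_of_sum_eq_zero Finset.univ hμ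
    (fun k _ => X.norm_le_opNorm_of_apply_eq_smul (he.1 k) (heig k))
    (fun k _ => hQ0.inner_apply_mem_Icc hQ1 (he.1 k))
end

section
/- Let Γ be a group with a paradoxical decomposition: pairwise disjoint subsets X₁,…,Xₙ,Y₁,…,Y_m of Γ and elements g₁,…,gₙ,h₁,…,h_m with g₁ = h₁ = e such that Γ = ⊔ᵢ gᵢXᵢ = ⊔ⱼ hⱼYⱼ = (⊔ᵢ Xᵢ) ⊔ (⊔ⱼ Yⱼ). Then for every nonzero finite-rank projection P on ℓ²(Γ) there exists x ∈ {g₁,…,gₙ,h₁,…,h_m} with ‖[λ_x, P]‖ ≥ 1/(n+m−2). -/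
/-!
Write `P = ∑ₖ |fₖ⟩⟨fₖ|` with `(fₖ)` orthonormal and `r = rank P`, and weigh `S ⊆ Γ` by
`D(S) = ∑ₖ ∑_{t ∈ S} |fₖ t|² = tr (P χ_S)`, a finitely additive function with `D(Γ) = r`.
Since `D(xS) = tr (λ_x⁻¹ P λ_x χ_S)` and `λ_x⁻¹ P λ_x - P` is self-adjoint of finite rank with at
most `r` positive eigenvalues, each at most `‖[λ_x, P]‖`, one gets
`D(xS) ≤ D(S) + r ‖[λ_x, P]‖`. Summing over each half of the paradoxical decomposition, where the
pieces with `gᵢ = 1` or `hⱼ = 1` cost nothing, gives `2r ≤ r + r ∑ₓ ‖[λ_x, P]‖` over the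
`n + m - 2` nontrivial translations.
-/

open scoped ENNReal Pointwise

theorem memℓp_comp_equiv {α β : Type*} (e : α ≃ β) (f : α → ℂ) (hf : Memℓp f 2) :
    Memℓp (fun b => f (e.symm b)) 2 := by
  rw [memℓp_gen_iff (by norm_num : 0 < (2:ℝ≥0∞).toReal)] at hf ⊢
  exact (e.symm.summable_iff (f := fun a => ‖f a‖ ^ (2:ℝ≥0∞).toReal)).2 hf

/-- Reindexing of `ℓ²` along an equivalence of index sets, as a linear isometric
equivalence: `f ↦ f ∘ e.symm`. -/
noncomputable def lpCongr {α β : Type*} (e : α ≃ β) :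
    lp (fun _ : α => ℂ) 2 ≃ₗᵢ[ℂ] lp (fun _ : β => ℂ) 2 where
  toLinearEquiv :=
    { toFun := fun f => ⟨fun b => f (e.symm b), memℓp_comp_equiv e f (lp.memℓp f)⟩
      invFun := fun g => ⟨fun a => g (e a), by
        show Memℓp _ _
        simpa using memℓp_comp_equiv e.symm (g : β → ℂ) (lp.memℓp g)⟩
      map_add' := by intro f g; ext b; rfl
      map_smul' := by intro c f; ext b; rfl
      left_inv := by intro f; ext a; simp
      right_inv := by intro g; ext b; simp }
  norm_map' := by
    intro f
    have h2 : 0 < (2:ℝ≥0∞).toReal := by norm_num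
    rw [lp.norm_eq_tsum_rpow h2, lp.norm_eq_tsum_rpow h2]
    congr 1
    exact e.symm.tsum_eq (f := fun a => ‖f a‖ ^ (2:ℝ≥0∞).toReal)

variable {Γ : Type*} [Group Γ]

/-- The left regular representation of a group `Γ` on `ℓ²(Γ)`:
`lam x` maps `δ_t` to `δ_{x t}`, i.e. `(lam x f) s = f (x⁻¹ * s)`. -/
noncomputable def lam (x : Γ) :
    lp (fun _ : Γ => ℂ) 2 ≃ₗᵢ[ℂ] lp (fun _ : Γ => ℂ) 2 :=
  lpCongr (Equiv.mulLeft x)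

/-- The left regular representation, as a continuous linear map on `ℓ²(Γ)`. -/
noncomputable def lamCLM (x : Γ) :
    lp (fun _ : Γ => ℂ) 2 →L[ℂ] lp (fun _ : Γ => ℂ) 2 :=
  ((lam x).toContinuousLinearEquiv : lp (fun _ : Γ => ℂ) 2 ≃L[ℂ] lp (fun _ : Γ => ℂ) 2)

open scoped InnerProductSpace lp
open InnerProductSpace

lemma sum_mul_le_card_pos_mul {κ : Type*} [Fintype κ] {μ c : κ → ℝ} {ε : ℝ}
    (hμ : ∀ i, μ i ≤ ε) (hc₀ : ∀ i, 0 ≤ c i) (hc₁ : ∀ i, c i ≤ 1) :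
    ∑ i, μ i * c i ≤ Fintype.card {i // 0 < μ i} * ε := by
  classical
  calc ∑ i, μ i * c i ≤ ∑ i, if 0 < μ i then ε else 0 := by
        refine Finset.sum_le_sum fun i _ => ?_
        split_ifs with h
        · nlinarith [hμ i, hc₁ i]
        · nlinarith [hc₀ i]
    _ = Fintype.card {i // 0 < μ i} * ε := by
        rw [Finset.sum_ite, Finset.sum_const, Finset.sum_const_zero, Fintype.card_subtype,
          nsmul_eq_mul, add_zero]

lemma sum_lt_card_sub_one_mul {κ : Type*} [Fintype κ] {a : κ → ℝ} {c : ℝ} {i₀ j : κ}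
    (hj : j ≠ i₀) (h₀ : a i₀ = 0) (hlt : ∀ i, a i < c) :
    ∑ i, a i < (Fintype.card κ - 1) * c := by
  classical
  rw [← Finset.add_sum_erase _ _ (Finset.mem_univ i₀), h₀, zero_add]
  calc ∑ i ∈ Finset.univ.erase i₀, a i < ∑ i ∈ Finset.univ.erase i₀, c :=
        Finset.sum_lt_sum_of_nonempty ⟨j, Finset.mem_erase.mpr ⟨hj, Finset.mem_univ j⟩⟩
          fun i _ => hlt i
    _ = (Fintype.card κ - 1) * c := by
        rw [Finset.sum_const, Finset.card_erase_of_mem (Finset.mem_univ i₀), Finset.card_univ,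
          nsmul_eq_mul, Nat.cast_pred (Fintype.card_pos_iff.mpr ⟨i₀⟩)]

section RankOneSums

variable {𝕜 E : Type*} [RCLike 𝕜] [NormedAddCommGroup E] [InnerProductSpace 𝕜 E]

lemma inner_sum_smul_rankOne_self_apply {κ : Type*} [Fintype κ] (c : κ → ℝ) (v : κ → E)
    (w : E) :
    ⟪w, (∑ k, (c k : 𝕜) • rankOne 𝕜 (v k) (v k) : E →L[𝕜] E) w⟫_𝕜
      = ((∑ k, c k * ‖⟪v k, w⟫_𝕜‖ ^ 2 : ℝ) : 𝕜) := by
  simp only [sum_apply, smul_apply, rankOne_apply, inner_sum, inner_smul_right]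
  push_cast
  refine Finset.sum_congr rfl fun k _ => ?_
  rw [← inner_conj_symm w (v k), RCLike.mul_conj]

lemma inner_sum_rankOne_self_apply {κ : Type*} [Fintype κ] (v : κ → E) (w : E) :
    ⟪w, (∑ k, rankOne 𝕜 (v k) (v k) : E →L[𝕜] E) w⟫_𝕜 = ((∑ k, ‖⟪v k, w⟫_𝕜‖ ^ 2 : ℝ) : 𝕜) := by
  simpa using inner_sum_smul_rankOne_self_apply (𝕜 := 𝕜) (fun _ => 1) v w

theorem IsStarProjection.exists_orthonormal_eq_sum_rankOne [CompleteSpace E] {P : E →L[𝕜] E}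
    (hP : IsStarProjection P) [FiniteDimensional 𝕜 (LinearMap.range (P : E →ₗ[𝕜] E))] :
    ∃ (r : ℕ) (f : Fin r → E), Orthonormal 𝕜 f ∧ P = ∑ k, rankOne 𝕜 (f k) (f k) := by
  obtain ⟨_, hP⟩ := isStarProjection_iff_eq_starProjection_range.mp hP
  set V := LinearMap.range (P : E →ₗ[𝕜] E)
  let b := stdOrthonormalBasis 𝕜 V
  exact ⟨_, fun k => b k, b.orthonormal.comp_linearIsometry V.subtypeₗᵢ,
    hP.trans b.starProjection_eq_sum_rankOne⟩

theorem LinearMap.IsSymmetric.exists_orthonormal_eq_sum_smul_rankOne {Q : E →L[𝕜] E}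
    (hQ : (Q : E →ₗ[𝕜] E).IsSymmetric) [FiniteDimensional 𝕜 (LinearMap.range (Q : E →ₗ[𝕜] E))] :
    ∃ (N : ℕ) (μ : Fin N → ℝ) (u : Fin N → E), Orthonormal 𝕜 u ∧
      (∀ i, Q (u i) = (μ i : 𝕜) • u i) ∧ Q = ∑ i, (μ i : 𝕜) • rankOne 𝕜 (u i) (u i) := by
  set V := LinearMap.range (Q : E →ₗ[𝕜] E)
  let Q' : V →ₗ[𝕜] V := (Q : E →ₗ[𝕜] E).rangeRestrict.domRestrict V
  have hQ' : Q'.IsSymmetric := fun x y => hQ x y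
  let b := hQ'.eigenvectorBasis rfl
  have heig : ∀ i, Q (b i) = (hQ'.eigenvalues rfl i : 𝕜) • (b i : E) := fun i =>
    congrArg Subtype.val (hQ'.apply_eigenvectorBasis rfl i)
  refine ⟨_, hQ'.eigenvalues rfl, fun i => b i,
    b.orthonormal.comp_linearIsometry V.subtypeₗᵢ, heig, ?_⟩
  ext v
  -- expand `Q v ∈ V` in the eigenbasis: `⟪b i, Q v⟫ = ⟪Q (b i), v⟫ = μᵢ ⟪b i, v⟫`
  have hexp := congrArg Subtype.val (b.sum_repr' ⟨Q v, LinearMap.mem_range_self _ v⟩)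
  simp only [Submodule.coe_sum, Submodule.coe_smul, Submodule.coe_inner] at hexp
  rw [← hexp, _root_.sum_apply]
  refine Finset.sum_congr rfl fun i _ => ?_
  rw [_root_.smul_apply, rankOne_apply, smul_smul, ← ContinuousLinearMap.coe_coe Q, ← hQ,
    ContinuousLinearMap.coe_coe, heig, inner_smul_left, RCLike.conj_ofReal]

-- Writing `Q` for either side of `h`: a combination `w` of the `u i` with `0 < μ i` that is
-- orthogonal to every `e k` has `0 ≤ ⟪w, Q w⟫ = -∑ₖ ‖⟪f k, w⟫‖² ≤ 0`, so it vanishes.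
-- Hence `w ↦ (⟪e k, w⟫)ₖ` is injective on that span.
lemma card_pos_le_of_sum_smul_rankOne_eq {κ : Type*} [Fintype κ] {μ : κ → ℝ} {u : κ → E}
    (hu : Orthonormal 𝕜 u) {r : ℕ} (e f : Fin r → E)
    (h : ∑ i, (μ i : 𝕜) • rankOne 𝕜 (u i) (u i)
      = ∑ k, rankOne 𝕜 (e k) (e k) - ∑ k, rankOne 𝕜 (f k) (f k)) :
    Fintype.card {i // 0 < μ i} ≤ r := by
  classical
  let L : ({i // 0 < μ i} → 𝕜) →ₗ[𝕜] (Fin r → 𝕜) :=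
    (LinearMap.pi fun k => innerₛₗ 𝕜 (e k)) ∘ₗ Fintype.linearCombination 𝕜 (fun i => u i)
  suffices Function.Injective L by
    simpa using LinearMap.finrank_le_finrank_of_injective this
  refine (injective_iff_map_eq_zero L).mpr fun a ha => ?_
  set w := ∑ i, a i • u i
  have he : ∀ k, ⟪e k, w⟫_𝕜 = 0 := fun k => by
    simpa [L, w, Fintype.linearCombination_apply, inner_sum, inner_smul_right] using congrFun ha k
  have hcoef : ∀ j, ⟪u j, w⟫_𝕜 = if h : 0 < μ j then a ⟨j, h⟩ else 0 := by
    intro j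
    split_ifs with hj
    · exact (hu.comp _ Subtype.val_injective).inner_right_fintype a ⟨j, hj⟩
    · rw [inner_sum]
      refine Finset.sum_eq_zero fun i _ => ?_
      rw [inner_smul_right, orthonormal_iff_ite.mp hu, if_neg (fun hji : j = i => hj (hji ▸ i.2)),
        mul_zero]
  have hquad : ∑ j, μ j * ‖⟪u j, w⟫_𝕜‖ ^ 2 = -∑ k, ‖⟪f k, w⟫_𝕜‖ ^ 2 := by
    have := congrArg (fun T : E →L[𝕜] E => ⟪w, T w⟫_𝕜) h
    rw [_root_.sub_apply, inner_sub_right, inner_sum_smul_rankOne_self_apply,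
      inner_sum_rankOne_self_apply, inner_sum_rankOne_self_apply] at this
    simp only [he, norm_zero, zero_pow two_ne_zero, Finset.sum_const_zero] at this
    rw [RCLike.ofReal_zero, zero_sub] at this
    exact_mod_cast this
  have hterm : ∀ j, 0 ≤ μ j * ‖⟪u j, w⟫_𝕜‖ ^ 2 := by
    intro j
    rw [hcoef j]
    split_ifs with hj
    · positivity
    · simp
  have hzero := (Finset.sum_eq_zero_iff_of_nonneg fun j _ => hterm j).mp
    (le_antisymm (hquad ▸ neg_nonpos.mpr (by positivity)) (Finset.sum_nonneg fun j _ => hterm j))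
  funext i
  have hi := hzero i.1 (Finset.mem_univ _)
  rw [hcoef, dif_pos i.2] at hi
  simpa [i.2.ne'] using hi

lemma LinearIsometryEquiv.symm_comp_rankOne_comp (U : E ≃ₗᵢ[𝕜] E) (a b : E) :
    (U.symm.toContinuousLinearEquiv : E →L[𝕜] E) ∘L rankOne 𝕜 a b
      ∘L (U.toContinuousLinearEquiv : E →L[𝕜] E) = rankOne 𝕜 (U.symm a) (U.symm b) := by
  ext v
  simp [U.symm.inner_map_eq_flip]

lemma LinearIsometryEquiv.norm_comp_sub_comp (U : E ≃ₗᵢ[𝕜] E) (T : E →L[𝕜] E) :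
    ‖(U.toContinuousLinearEquiv : E →L[𝕜] E) ∘L T - T ∘L (U.toContinuousLinearEquiv : E →L[𝕜] E)‖
      = ‖(U.symm.toContinuousLinearEquiv : E →L[𝕜] E) ∘L T
          ∘L (U.toContinuousLinearEquiv : E →L[𝕜] E) - T‖ := by
  rw [← U.symm.toLinearIsometry.norm_toContinuousLinearMap_comp, ← norm_neg]
  congr 1
  ext v
  simp

end RankOneSums

section MassOn

variable {𝕜 ι : Type*} [RCLike 𝕜]

noncomputable def massOn (S : Set ι) (v : ℓ²(ι, 𝕜)) : ℝ := ∑' t : S, ‖v t‖ ^ 2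

lemma lp.hasSum_norm_sq (v : ℓ²(ι, 𝕜)) : HasSum (fun t => ‖v t‖ ^ 2) (‖v‖ ^ 2) := by
  simpa using lp.hasSum_norm (p := 2) (by norm_num) v

lemma massOn_univ (v : ℓ²(ι, 𝕜)) : massOn Set.univ v = ‖v‖ ^ 2 := by
  rw [massOn, tsum_univ fun t => ‖v t‖ ^ 2]
  exact (lp.hasSum_norm_sq v).tsum_eq

lemma massOn_le (S : Set ι) (v : ℓ²(ι, 𝕜)) : massOn S v ≤ ‖v‖ ^ 2 :=
  (lp.hasSum_norm_sq v).tsum_eq ▸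
    (lp.hasSum_norm_sq v).summable.tsum_subtype_le _ S fun _ => by positivity

lemma massOn_iUnion {κ : Type*} [Fintype κ] {S : κ → Set ι}
    (hS : Pairwise (Function.onFun Disjoint S)) (v : ℓ²(ι, 𝕜)) :
    massOn (⋃ i, S i) v = ∑ i, massOn (S i) v := by
  have hU : (⋃ i, S i) = ⋃ i ∈ Finset.univ, S i := by simp only [Finset.mem_univ, Set.iUnion_true]
  rw [hU]
  exact Summable.tsum_finset_bUnion_disjoint (fun i _ j _ hij => hS hij) fun i _ =>
    (lp.hasSum_norm_sq v).summable.subtype (S i)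

lemma norm_inner_single_one [DecidableEq ι] (v : ℓ²(ι, 𝕜)) (t : ι) :
    ‖⟪v, lp.single 2 t (1 : 𝕜)⟫_𝕜‖ = ‖v t‖ := by
  simp [lp.inner_single_right]

lemma sum_massOn_sub_sum_massOn_eq {κ : Type*} [Fintype κ] {μ : κ → ℝ} {u : κ → ℓ²(ι, 𝕜)}
    {r : ℕ} {e f : Fin r → ℓ²(ι, 𝕜)}
    (h : ∑ i, (μ i : 𝕜) • rankOne 𝕜 (u i) (u i)
      = ∑ k, rankOne 𝕜 (e k) (e k) - ∑ k, rankOne 𝕜 (f k) (f k)) (S : Set ι) :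
    ∑ k, massOn S (e k) - ∑ k, massOn S (f k) = ∑ i, μ i * massOn S (u i) := by
  classical
  -- compare the diagonal entries `⟪δ_t, T δ_t⟫` of the two sides of `h`
  have hdiag : ∀ t, ∑ k, ‖e k t‖ ^ 2 - ∑ k, ‖f k t‖ ^ 2 = ∑ i, μ i * ‖u i t‖ ^ 2 := by
    intro t
    have := congrArg (fun T : ℓ²(ι, 𝕜) →L[𝕜] ℓ²(ι, 𝕜) =>
      ⟪lp.single 2 t (1 : 𝕜), T (lp.single 2 t 1)⟫_𝕜) h
    rw [_root_.sub_apply, inner_sub_right, inner_sum_smul_rankOne_self_apply,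
      inner_sum_rankOne_self_apply, inner_sum_rankOne_self_apply] at this
    simp only [norm_inner_single_one] at this
    exact_mod_cast this.symm
  have hs : ∀ v : ℓ²(ι, 𝕜), Summable fun t : S => ‖v t‖ ^ 2 := fun v =>
    (lp.hasSum_norm_sq v).summable.subtype S
  simp only [massOn]
  rw [← Summable.tsum_finsetSum fun k _ => hs (e k), ← Summable.tsum_finsetSum fun k _ => hs (f k),
    ← Summable.tsum_sub (summable_sum fun k _ => hs (e k)) (summable_sum fun k _ => hs (f k))]
  simp only [hdiag, ← tsum_mul_left]
  exact Summable.tsum_finsetSum fun i _ => (hs (u i)).mul_left (μ i)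

-- With `A = ∑ₖ |eₖ⟩⟨eₖ|` and `P = ∑ₖ |fₖ⟩⟨fₖ|`, the left side minus the first sum on the right
-- is `tr (χ_S (A - P)) = ∑ᵢ μᵢ ‖χ_S uᵢ‖²` for an eigen-decomposition of `A - P`; it is at most
-- `‖A - P‖` times the number of positive `μᵢ`, and there are at most `r` of those.
theorem sum_massOn_le_sum_massOn_add_mul_norm {r : ℕ} (S : Set ι) (e f : Fin r → ℓ²(ι, 𝕜)) :
    ∑ k, massOn S (e k) ≤ ∑ k, massOn S (f k)
      + r * ‖∑ k, rankOne 𝕜 (e k) (e k) - ∑ k, rankOne 𝕜 (f k) (f k)‖ := by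
  set Q := ∑ k, rankOne 𝕜 (e k) (e k) - ∑ k, rankOne 𝕜 (f k) (f k)
  have hQ : (Q : ℓ²(ι, 𝕜) →ₗ[𝕜] ℓ²(ι, 𝕜)).IsSymmetric := by
    simp only [Q, ContinuousLinearMap.toLinearMap_sub, ContinuousLinearMap.toLinearMap_sum]
    exact (LinearMap.isSymmetric_sum _ fun k _ => isSymmetric_rankOne_self (e k)).sub
      (LinearMap.isSymmetric_sum _ fun k _ => isSymmetric_rankOne_self (f k))
  have hrange : LinearMap.range (Q : ℓ²(ι, 𝕜) →ₗ[𝕜] ℓ²(ι, 𝕜))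
      ≤ Submodule.span 𝕜 (Set.range e ∪ Set.range f) := by
    rintro _ ⟨v, rfl⟩
    simp only [Q, ContinuousLinearMap.coe_coe, _root_.sub_apply, _root_.sum_apply, rankOne_apply]
    exact sub_mem
      (sum_mem fun k _ => Submodule.smul_mem _ _ (Submodule.subset_span (.inl ⟨k, rfl⟩)))
      (sum_mem fun k _ => Submodule.smul_mem _ _ (Submodule.subset_span (.inr ⟨k, rfl⟩)))
  have := FiniteDimensional.span_of_finite 𝕜 ((Set.finite_range e).union (Set.finite_range f))
  have := Submodule.finiteDimensional_of_le hrange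
  obtain ⟨N, μ, u, hu, heig, hQu⟩ := hQ.exists_orthonormal_eq_sum_smul_rankOne
  have hμ : ∀ i, μ i ≤ ‖Q‖ := fun i => calc
    μ i ≤ |μ i| := le_abs_self _
    _ = ‖Q (u i)‖ := by rw [heig, norm_smul, hu.1 i, mul_one, RCLike.norm_ofReal]
    _ ≤ ‖Q‖ := by simpa [hu.1 i] using Q.le_opNorm (u i)
  have hcard : (Fintype.card {i // 0 < μ i} : ℝ) ≤ r := by
    exact_mod_cast card_pos_le_of_sum_smul_rankOne_eq hu e f hQu.symm
  have hmass := sum_massOn_sub_sum_massOn_eq hQu.symm S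
  have hbound := sum_mul_le_card_pos_mul (c := fun i => massOn S (u i)) hμ
    (fun i => tsum_nonneg fun _ => sq_nonneg _) fun i => by simpa [hu.1 i] using massOn_le S (u i)
  nlinarith [norm_nonneg Q]

lemma sum_sum_massOn_eq_of_iUnion_eq_univ {κ : Type*} [Fintype κ] {r : ℕ}
    {f : Fin r → ℓ²(ι, 𝕜)} (hf : Orthonormal 𝕜 f) {Z : κ → Set ι}
    (hdisj : Pairwise (Function.onFun Disjoint Z)) (hcov : ⋃ i, Z i = Set.univ) :
    ∑ i, ∑ k, massOn (Z i) (f k) = r := by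
  rw [Finset.sum_comm]
  simp [← massOn_iUnion hdisj, hcov, massOn_univ, hf.1]

end MassOn

section LeftRegular

lemma lamCLM_one : lamCLM (1 : Γ) = ContinuousLinearMap.id ℂ ℓ²(Γ, ℂ) := by
  ext v t
  simp [lamCLM, lam, lpCongr]

lemma massOn_smul_set (x : Γ) (S : Set Γ) (v : ℓ²(Γ, ℂ)) :
    massOn (x • S) v = massOn S ((lam x).symm v) := by
  rw [massOn, ← Set.image_smul, tsum_image (fun t => ‖v t‖ ^ 2) (MulAction.injective x).injOn]
  rfl

lemma sum_massOn_smul_set_le {r : ℕ} {f : Fin r → ℓ²(Γ, ℂ)} {P : ℓ²(Γ, ℂ) →L[ℂ] ℓ²(Γ, ℂ)}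
    (hP : P = ∑ k, rankOne ℂ (f k) (f k)) (x : Γ) (S : Set Γ) :
    ∑ k, massOn (x • S) (f k) ≤ ∑ k, massOn S (f k) + r * ‖lamCLM x ∘L P - P ∘L lamCLM x‖ := by
  have hconj : ((lam x).symm.toContinuousLinearEquiv : ℓ²(Γ, ℂ) →L[ℂ] ℓ²(Γ, ℂ)) ∘L P
      ∘L ((lam x).toContinuousLinearEquiv : ℓ²(Γ, ℂ) →L[ℂ] ℓ²(Γ, ℂ))
        = ∑ k, rankOne ℂ ((lam x).symm (f k)) ((lam x).symm (f k)) := by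
    simp only [hP, ContinuousLinearMap.finsetSum_comp, ContinuousLinearMap.comp_finsetSum,
      LinearIsometryEquiv.symm_comp_rankOne_comp]
  rw [lamCLM, LinearIsometryEquiv.norm_comp_sub_comp, hconj, hP]
  simp only [massOn_smul_set]
  exact sum_massOn_le_sum_massOn_add_mul_norm S _ f

lemma rank_le_sum_sum_massOn_add {r : ℕ} {f : Fin r → ℓ²(Γ, ℂ)} (hf : Orthonormal ℂ f)
    {P : ℓ²(Γ, ℂ) →L[ℂ] ℓ²(Γ, ℂ)} (hP : P = ∑ k, rankOne ℂ (f k) (f k))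
    {κ : Type*} [Fintype κ] (Z : κ → Set Γ) (z : κ → Γ) (hcov : ⋃ i, z i • Z i = Set.univ)
    (hdisj : Pairwise (Function.onFun Disjoint fun i => z i • Z i)) :
    (r : ℝ) ≤ ∑ i, ∑ k, massOn (Z i) (f k)
      + r * ∑ i, ‖lamCLM (z i) ∘L P - P ∘L lamCLM (z i)‖ := by
  calc (r : ℝ) = ∑ i, ∑ k, massOn (z i • Z i) (f k) :=
        (sum_sum_massOn_eq_of_iUnion_eq_univ hf hdisj hcov).symm
    _ ≤ ∑ i, (∑ k, massOn (Z i) (f k) + r * ‖lamCLM (z i) ∘L P - P ∘L lamCLM (z i)‖) :=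
        Finset.sum_le_sum fun i _ => sum_massOn_smul_set_le hP (z i) (Z i)
    _ = _ := by rw [Finset.sum_add_distrib, Finset.mul_sum]

end LeftRegular

/-- quantitative Rosenberg. Suppose the group `Γ` has a paradoxical
decomposition `Γ = ⊔ᵢ gᵢXᵢ = ⊔ⱼ hⱼYⱼ = (⊔ᵢ Xᵢ) ⊔ (⊔ⱼ Yⱼ)` with `g 0 = h 0 = 1`.
Then for every nonzero finite-rank orthogonal projection `P` on `ℓ²(Γ)` there is
`x ∈ {g₁,…,gₙ,h₁,…,h_m}` with `‖[λ_x, P]‖ ≥ 1/(n+m−2)`. -/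
theorem quantitative_rosenberg
    {Γ : Type} [Group Γ] {n m : ℕ} (hn : 2 ≤ n) (hm : 2 ≤ m)
    (X : Fin n → Set Γ) (Y : Fin m → Set Γ) (g : Fin n → Γ) (h : Fin m → Γ)
    (hg1 : g ⟨0, by omega⟩ = 1) (hh1 : h ⟨0, by omega⟩ = 1)
    (hdisj : Pairwise (Function.onFun Disjoint (Sum.elim X Y)))
    (hcov1 : (⋃ i, g i • X i) = Set.univ)
    (hdisj1 : Pairwise (Function.onFun Disjoint fun i => g i • X i))
    (hcov2 : (⋃ j, h j • Y j) = Set.univ)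
    (hdisj2 : Pairwise (Function.onFun Disjoint fun j => h j • Y j))
    (hcov3 : (⋃ i, X i) ∪ (⋃ j, Y j) = Set.univ)
    (P : lp (fun _ : Γ => ℂ) 2 →L[ℂ] lp (fun _ : Γ => ℂ) 2)
    (hPidem : IsIdempotentElem P) (hPsa : IsSelfAdjoint P)
    (hPfr : FiniteDimensional ℂ (LinearMap.range (P : lp (fun _ : Γ => ℂ) 2 →ₗ[ℂ] lp (fun _ : Γ => ℂ) 2))) (hPne : P ≠ 0) :
    ∃ x ∈ Set.range g ∪ Set.range h,
      1 / ((n : ℝ) + m - 2) ≤ ‖lamCLM x ∘L P - P ∘L lamCLM x‖ := by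
  by_contra! hlt
  obtain ⟨r, f, hf, hP⟩ := IsStarProjection.exists_orthonormal_eq_sum_rankOne ⟨hPidem, hPsa⟩
  have hr : (0 : ℝ) < r := Nat.cast_pos.mpr <| Nat.pos_of_ne_zero fun hr => hPne (by
    subst hr; simpa using hP)
  have hcomm_one : ‖lamCLM (1 : Γ) ∘L P - P ∘L lamCLM 1‖ = 0 := by simp [lamCLM_one]
  have hX := rank_le_sum_sum_massOn_add hf hP X g hcov1 hdisj1
  have hY := rank_le_sum_sum_massOn_add hf hP Y h hcov2 hdisj2
  have hX' := sum_lt_card_sub_one_mul (i₀ := ⟨0, by omega⟩) (j := ⟨1, by omega⟩)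
    (Fin.ne_of_val_ne one_ne_zero) (by rw [hg1]; exact hcomm_one) fun i => hlt (g i) (.inl ⟨i, rfl⟩)
  have hY' := sum_lt_card_sub_one_mul (i₀ := ⟨0, by omega⟩) (j := ⟨1, by omega⟩)
    (Fin.ne_of_val_ne one_ne_zero) (by rw [hh1]; exact hcomm_one) fun j => hlt (h j) (.inr ⟨j, rfl⟩)
  have htot : ∑ i, ∑ k, massOn (X i) (f k) + ∑ j, ∑ k, massOn (Y j) (f k) = r := by
    have := sum_sum_massOn_eq_of_iUnion_eq_univ hf hdisj (by rwa [Set.iUnion_sum])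
    rwa [Fintype.sum_sum_type] at this
  have hc : ((n : ℝ) - 1) * (1 / (n + m - 2)) + ((m : ℝ) - 1) * (1 / (n + m - 2)) = 1 := by
    have : (n : ℝ) + m - 2 ≠ 0 := by
      have : (4 : ℝ) ≤ n + m := by exact_mod_cast Nat.add_le_add hn hm
      linarith
    field_simp
    ring
  simp only [Fintype.card_fin] at hX' hY'
  nlinarith [mul_lt_mul_of_pos_left hX' hr, mul_lt_mul_of_pos_left hY' hr]
end

section
/- A countable discrete group Γ is LEF (locally embeddable into finite groups) if and only if there exists a sequence of finite groups (H_k) and an injective group homomorphism from Γ into the quotient group (∏_k H_k)/(⊕_k H_k). -/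
/-!
An element of `(∏ₖ Hₖ)/(⊕ₖ Hₖ)` is a sequence taken up to eventual equality. If `Γ` is LEF,
exhaust it by finite sets `Fₖ` and pick local embeddings `φₖ : Γ → Hₖ` of `Fₖ`: each relation
`s * t = u` holds for `φₖ` once `k` is large, and distinct elements of `Γ` never eventually
agree, so `g ↦ [(φₖ g)ₖ]` is an injective homomorphism. Conversely, lift an embedding `Φ` to
sequences `f g`. For a finite `F ⊆ Γ` the finitely many relations among elements of `F` hold
from some index on, while two distinct elements differ at infinitely many indices; so a finite
set `S` of large indices separates `F`, and `g ↦ (f g k)_{k ∈ S}` is a local embedding of `F`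
into the finite group `∏_{k ∈ S} Hₖ`.
-/

/-- A group `Γ` is *LEF* (locally embeddable into finite groups) if for every finite
subset `F ⊆ Γ` there are a finite group `H` and a map `φ : Γ → H` that is injective on
`F` and multiplicative on `F` (i.e. `φ(st) = φ(s)φ(t)` whenever `s, t, st ∈ F`). -/
def IsLEF (Γ : Type*) [Group Γ] : Prop :=
  ∀ F : Finset Γ, ∃ (H : Type) (_ : Group H) (_ : Finite H) (φ : Γ → H),
    Set.InjOn φ F ∧ ∀ s ∈ F, ∀ t ∈ F, s * t ∈ (F : Set Γ) → φ (s * t) = φ s * φ t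

/-- The direct product `∏ₖ H k` of a sequence of groups, with the group instance
supplied explicitly. -/
def DirectProd (H : ℕ → Type*) (inst : ∀ k, Group (H k)) : Type _ := ∀ k, H k

instance (H : ℕ → Type*) (inst : ∀ k, Group (H k)) : Group (DirectProd H inst) :=
  letI := inst; (inferInstance : Group (∀ k, H k))

/-- The normal subgroup `⊕ₖ H k` of `∏ₖ H k` consisting of the sequences that are
eventually equal to the identity. -/
def directSum (H : ℕ → Type*) (inst : ∀ k, Group (H k)) : Subgroup (DirectProd H inst) :=
  letI := inst
  { carrier := {f : ∀ k, H k | ∀ᶠ k in Filter.atTop, f k = 1}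
    one_mem' := Filter.Eventually.of_forall fun _ => rfl
    mul_mem' := fun {f g} hf hg => by
      filter_upwards [hf, hg] with k hk hk'
      show f k * g k = 1
      rw [hk, hk', one_mul]
    inv_mem' := fun {f} hf => by
      filter_upwards [hf] with k hk
      show (f k)⁻¹ = 1
      rw [hk, inv_one] }

instance (H : ℕ → Type*) (inst : ∀ k, Group (H k)) : (directSum H inst).Normal := by
  letI := inst
  constructor
  intro f hf g
  filter_upwards [hf] with k hk
  show g k * f k * (g k)⁻¹ = 1
  rw [hk, mul_one, mul_inv_cancel]

/-- The quotient group `(∏ₖ H k) / (⊕ₖ H k)`. -/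
def ProdModSum (H : ℕ → Type*) (inst : ∀ k, Group (H k)) : Type _ :=
  DirectProd H inst ⧸ directSum H inst

instance (H : ℕ → Type*) (inst : ∀ k, Group (H k)) : Group (ProdModSum H inst) :=
  QuotientGroup.Quotient.group _

open Filter Function

theorem Filter.exists_finset_eventually_and_frequently {α ι : Type*} {l : Filter α}
    {p : α → Prop} {q : ι → α → Prop} (s : Finset ι) (hp : ∀ᶠ a in l, p a)
    (hq : ∀ i ∈ s, ∃ᶠ a in l, q i a) :
    ∃ S : Finset α, (∀ a ∈ S, p a) ∧ ∀ i ∈ s, ∃ a ∈ S, q i a := by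
  classical
  choose a ha using fun (i : s) => ((hq i i.2).and_eventually hp).exists
  refine ⟨Finset.univ.image a, fun b hb => ?_, fun i hi =>
    ⟨a ⟨i, hi⟩, Finset.mem_image_of_mem _ (Finset.mem_univ _), (ha ⟨i, hi⟩).1⟩⟩
  obtain ⟨i, -, rfl⟩ := Finset.mem_image.1 hb
  exact (ha i).2

theorem Countable.exists_finset_eventually_mem (α : Type*) [Countable α] :
    ∃ F : ℕ → Finset α, ∀ a, ∀ᶠ k in atTop, a ∈ F k := by
  obtain ⟨e, he⟩ := exists_injective_nat α
  refine ⟨fun k => (Finset.range k).preimage e he.injOn, fun a => ?_⟩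
  filter_upwards [eventually_gt_atTop (e a)] with k hk
  exact Finset.mem_preimage.2 (Finset.mem_range.2 hk)

namespace ProdModSum

variable {H : ℕ → Type*} {inst : ∀ k, Group (H k)}

def mk : DirectProd H inst →* ProdModSum H inst := QuotientGroup.mk' (directSum H inst)

theorem mk_eq_mk_iff {x y : DirectProd H inst} :
    mk x = mk y ↔ ∀ᶠ k in atTop, x k = y k :=
  QuotientGroup.eq.trans <| eventually_congr <| .of_forall fun _ => inv_mul_eq_one

theorem mk_surjective : Surjective (mk : DirectProd H inst → ProdModSum H inst) :=
  QuotientGroup.mk_surjective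

variable {Γ : Type*} [Group Γ]

def lift (φ : ∀ k, Γ → H k)
    (hφ : ∀ s t, ∀ᶠ k in atTop, φ k (s * t) = φ k s * φ k t) : Γ →* ProdModSum H inst :=
  MonoidHom.mk' (fun g => mk fun k => φ k g) fun s t =>
    (mk_eq_mk_iff.2 (hφ s t)).trans (map_mul mk _ _)

theorem lift_injective {φ : ∀ k, Γ → H k}
    {hφ : ∀ s t, ∀ᶠ k in atTop, φ k (s * t) = φ k s * φ k t}
    (hsep : ∀ s t, (∀ᶠ k in atTop, φ k s = φ k t) → s = t) : Injective (lift φ hφ) :=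
  fun s t hst => hsep s t (mk_eq_mk_iff.1 hst)

end ProdModSum

theorem IsLEF.exists_injective_hom_prodModSum {Γ : Type} [Group Γ] [Countable Γ]
    (hΓ : IsLEF Γ) :
    ∃ (H : ℕ → Type) (inst : ∀ k, Group (H k)) (_ : ∀ k, Finite (H k))
      (Φ : Γ →* ProdModSum H inst), Injective Φ := by
  obtain ⟨F, hF⟩ := Countable.exists_finset_eventually_mem Γ
  choose H inst hfin φ hinj hmul using fun k => hΓ (F k)
  have hφ : ∀ s t, ∀ᶠ k in atTop, φ k (s * t) = φ k s * φ k t := fun s t => by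
    filter_upwards [hF s, hF t, hF (s * t)] with k hs ht hst using hmul k s hs t ht hst
  refine ⟨H, inst, hfin, ProdModSum.lift φ hφ, ProdModSum.lift_injective fun s t hst => ?_⟩
  obtain ⟨k, hk, hs, ht⟩ := (hst.and ((hF s).and (hF t))).exists
  exact hinj k hs ht hk

theorem isLEF_of_injective_hom_prodModSum {Γ : Type*} [Group Γ] {H : ℕ → Type}
    {inst : ∀ k, Group (H k)} [∀ k, Finite (H k)] {Φ : Γ →* ProdModSum H inst}
    (hΦ : Injective Φ) : IsLEF Γ := by
  intro F
  choose f hf using fun g => ProdModSum.mk_surjective (Φ g)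
  have hmul : ∀ s t, ∀ᶠ k in atTop, f (s * t) k = f s k * f t k := fun s t =>
    (ProdModSum.mk_eq_mk_iff (y := f s * f t)).1 (by rw [map_mul, hf, hf, hf, map_mul])
  have hsep : ∀ s t, s ≠ t → ∃ᶠ k in atTop, f s k ≠ f t k := fun s t hst =>
    not_eventually.1 fun h => hst <| hΦ <| by
      rw [← hf, ← hf]
      exact ProdModSum.mk_eq_mk_iff.2 h
  have hmulF : ∀ᶠ k in atTop, ∀ s ∈ F, ∀ t ∈ F, s * t ∈ F → f (s * t) k = f s k * f t k := by
    refine (eventually_all_finset F).2 fun s _ => (eventually_all_finset F).2 fun t _ => ?_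
    filter_upwards [hmul s t] with k hk _ using hk
  obtain ⟨S, hSmul, hSsep⟩ := exists_finset_eventually_and_frequently F.offDiag hmulF
    fun p hp => hsep p.1 p.2 (Finset.mem_offDiag.1 hp).2.2
  refine ⟨∀ k : S, H k, inferInstance, inferInstance, fun g k => f g k, ?_, ?_⟩
  · intro s hs t ht hst
    by_contra hne
    obtain ⟨k, hk, hne⟩ := hSsep (s, t) (Finset.mem_offDiag.2 ⟨hs, ht, hne⟩)
    exact hne (congrFun hst ⟨k, hk⟩)
  · intro s hs t ht hst
    funext k
    exact hSmul k k.2 s hs t ht hst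

/-- A countable discrete group `Γ` is LEF if and only if there are a
sequence of finite groups `(H k)` and an injective group homomorphism from `Γ` into the
quotient `(∏ₖ H k)/(⊕ₖ H k)`. -/
theorem isLEF_iff_embeds_prodModSum (Γ : Type) [Group Γ] [Countable Γ] :
    IsLEF Γ ↔
      ∃ (H : ℕ → Type) (inst : ∀ k, Group (H k)) (_ : ∀ k, Finite (H k))
        (Φ : Γ →* ProdModSum H inst), Function.Injective Φ := by
  refine ⟨IsLEF.exists_injective_hom_prodModSum, ?_⟩
  rintro ⟨H, inst, _, Φ, hΦ⟩
  exact isLEF_of_injective_hom_prodModSum hΦ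
end

section
/- Every countable discrete LEF group Γ is MF; that is, Γ embeds into the unitary group of the C*-algebra (∏_k M_{n_k}(ℂ))/(⊕_k M_{n_k}(ℂ)) for some sequence of positive integers (n_k). In fact, one can construct a group homomorphism π: Γ → U(Q) with ‖π(s) − π(t)‖ ≥ √2 for all distinct s, t ∈ Γ. -/
open Filter

theorem Orthonormal.norm_sub_eq_sqrt_two {𝕜 E ι : Type*} [RCLike 𝕜] [NormedAddCommGroup E]
    [InnerProductSpace 𝕜 E] {v : ι → E} (hv : Orthonormal 𝕜 v) {i j : ι} (h : i ≠ j) :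
    ‖v i - v j‖ = √2 := by
  rw [← Real.sqrt_sq (norm_nonneg _), @norm_sub_sq 𝕜, hv.inner_eq_zero h, hv.norm_eq_one,
    hv.norm_eq_one]
  norm_num

theorem CStarRing.norm_coe_unitary_sub_le_two {E : Type*} [NormedRing E] [StarRing E]
    [CStarRing E] (U V : unitary E) : ‖(U : E) - V‖ ≤ 2 := by
  rcases subsingleton_or_nontrivial E with hE | hE
  · simp [Subsingleton.elim ((U : E) - V) 0]
  · calc ‖(U : E) - V‖ ≤ ‖(U : E)‖ + ‖(V : E)‖ := norm_sub_le _ _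
      _ = 2 := by rw [norm_coe_unitary, norm_coe_unitary, one_add_one_eq_two]

noncomputable def EuclideanSpace.permUnitary (𝕜 : Type*) [RCLike 𝕜] (ι : Type*) [Fintype ι] :
    Equiv.Perm ι →* unitary (EuclideanSpace 𝕜 ι →L[𝕜] EuclideanSpace 𝕜 ι) :=
  Unitary.linearIsometryEquiv.symm.toMonoidHom.comp
    { toFun := LinearIsometryEquiv.piLpCongrLeft 2 𝕜 𝕜
      map_one' := by ext; rfl
      map_mul' := fun _ _ => by ext; rfl }

namespace EuclideanSpace

variable {𝕜 : Type*} [RCLike 𝕜] {ι : Type*} [Fintype ι] [DecidableEq ι]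

theorem permUnitary_apply_single (σ : Equiv.Perm ι) (i : ι) (a : 𝕜) :
    (permUnitary 𝕜 ι σ : EuclideanSpace 𝕜 ι →L[𝕜] EuclideanSpace 𝕜 ι) (single i a) =
      single (σ i) a :=
  piLpCongrLeft_single σ i a

theorem sqrt_two_le_norm_permUnitary_sub {σ τ : Equiv.Perm ι} (h : σ ≠ τ) :
    √2 ≤ ‖(permUnitary 𝕜 ι σ : EuclideanSpace 𝕜 ι →L[𝕜] EuclideanSpace 𝕜 ι) -
      permUnitary 𝕜 ι τ‖ := by
  obtain ⟨i, hi⟩ : ∃ i, σ i ≠ τ i := not_forall.mp (mt Equiv.ext h)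
  calc √2 = ‖((permUnitary 𝕜 ι σ : EuclideanSpace 𝕜 ι →L[𝕜] EuclideanSpace 𝕜 ι) -
          permUnitary 𝕜 ι τ) (single i 1)‖ := by
        rw [sub_apply, permUnitary_apply_single, permUnitary_apply_single,
          (orthonormal_single (𝕜 := 𝕜)).norm_sub_eq_sqrt_two hi]
    _ ≤ _ := ContinuousLinearMap.unit_le_opNorm _ _ (by simp)

end EuclideanSpace

noncomputable def regularPerm (H : Type*) [Group H] [Finite H] :
    H →* Equiv.Perm (Fin (Nat.card H)) :=
  (Finite.equivFin H).permCongrHom.toMonoidHom.comp (MulAction.toPermHom H H)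

theorem regularPerm_injective (H : Type*) [Group H] [Finite H] :
    Function.Injective (regularPerm H) :=
  (Finite.equivFin H).permCongrHom.injective.comp MulAction.toPerm_injective

theorem exists_finset_seq_eventually_mem (α : Type*) [Countable α] :
    ∃ G : ℕ → Finset α, ∀ a, ∀ᶠ k in atTop, a ∈ G k := by
  obtain ⟨f, hf⟩ := exists_injective_nat α
  refine ⟨fun k => (Finset.range k).preimage f hf.injOn, fun a => ?_⟩
  filter_upwards [eventually_gt_atTop (f a)] with k hk
  simpa using hk

namespace IsLEF

open Pointwise

variable {Γ : Type*} [Group Γ]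

theorem exists_injOn_mul_eq (hΓ : IsLEF Γ) (G : Finset Γ) :
    ∃ (H : Type) (_ : Group H) (_ : Finite H) (φ : Γ → H),
      Set.InjOn φ G ∧ ∀ s ∈ G, ∀ t ∈ G, φ (s * t) = φ s * φ t := by
  classical
  obtain ⟨H, instH, instF, φ, hinj, hmul⟩ := hΓ (G ∪ G * G)
  refine ⟨H, instH, instF, φ, hinj.mono (by simp), fun s hs t ht => ?_⟩
  exact hmul s (Finset.mem_union_left _ hs) t (Finset.mem_union_left _ ht)
    (Finset.mem_union_right _ (Finset.mul_mem_mul hs ht))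

theorem exists_eventually_mul_eq_and_ne [Countable Γ] (hΓ : IsLEF Γ) :
    ∃ (H : ℕ → Type) (_ : ∀ k, Group (H k)) (_ : ∀ k, Finite (H k)) (φ : ∀ k, Γ → H k),
      (∀ s t, ∀ᶠ k in atTop, φ k (s * t) = φ k s * φ k t) ∧
      ∀ s t, s ≠ t → ∀ᶠ k in atTop, φ k s ≠ φ k t := by
  obtain ⟨G, hG⟩ := exists_finset_seq_eventually_mem Γ
  choose H instH instF φ hinj hmul using fun k => hΓ.exists_injOn_mul_eq (G k)
  refine ⟨H, instH, instF, φ, fun s t => ?_, fun s t hst => ?_⟩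
  · filter_upwards [hG s, hG t] with k hs ht using hmul k s hs t ht
  · filter_upwards [hG s, hG t] with k hs ht using hst ∘ hinj k hs ht

end IsLEF

/-- Every countable discrete LEF group `Γ` is MF: there are a sequence
of positive integers `(n k)` and unitaries `σ k s` on `ℂ^{n k}` implementing a group
homomorphism `π : Γ → U(∏ₖ M_{n k}(ℂ)/⊕ₖ M_{n k}(ℂ))` — i.e. `σ` is multiplicative and
unital modulo sequences tending to `0` in norm — such that, in the quotient norm
(`‖(a_k) + ⊕‖ = limsup ‖a_k‖`), `‖π(s) − π(t)‖ ≥ √2` for all distinct `s, t ∈ Γ`. -/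
theorem isLEF_implies_MF (Γ : Type) [Group Γ] [Countable Γ] (hLEF : IsLEF Γ) :
    ∃ n : ℕ → ℕ, (∀ k, 0 < n k) ∧
      ∃ σ : ∀ k : ℕ, Γ → (EuclideanSpace ℂ (Fin (n k)) →L[ℂ] EuclideanSpace ℂ (Fin (n k))),
        (∀ k s, σ k s ∈ unitary (EuclideanSpace ℂ (Fin (n k)) →L[ℂ] EuclideanSpace ℂ (Fin (n k)))) ∧
        Tendsto (fun k => ‖σ k 1 - 1‖) atTop (nhds 0) ∧
        (∀ s t : Γ, Tendsto (fun k => ‖σ k (s * t) - σ k s ∘L σ k t‖) atTop (nhds 0)) ∧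
        (∀ s t : Γ, s ≠ t →
          Real.sqrt 2 ≤ limsup (fun k => ‖σ k s - σ k t‖) atTop) := by
  obtain ⟨H, _, _, φ, hmul, hne⟩ := hLEF.exists_eventually_mul_eq_and_ne
  let U k : H k →* unitary _ := (EuclideanSpace.permUnitary ℂ _).comp (regularPerm (H k))
  refine ⟨fun k => Nat.card (H k), fun k => Nat.card_pos, fun k s => U k (φ k s),
    fun k s => (U k (φ k s)).2, ?_, fun s t => ?_, fun s t hst => ?_⟩
  · refine tendsto_const_nhds.congr' ((hmul 1 1).mono fun k hk => ?_)
    rw [one_mul, left_eq_mul] at hk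
    beta_reduce
    rw [hk, map_one, OneMemClass.coe_one, sub_self, norm_zero]
  · refine tendsto_const_nhds.congr' ((hmul s t).mono fun k hk => ?_)
    beta_reduce
    rw [hk, (U k).map_mul, Submonoid.coe_mul, ContinuousLinearMap.mul_def, sub_self, norm_zero]
  · refine le_limsup_of_frequently_le ((hne s t hst).mono fun k hk => ?_).frequently
      (isBoundedUnder_of ⟨2, fun k => CStarRing.norm_coe_unitary_sub_le_two _ _⟩)
    exact EuclideanSpace.sqrt_two_le_norm_permUnitary_sub ((regularPerm_injective _).ne hk)
end
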